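/- Let r ≤ d be natural numbers and let p₀, p₁, …, p_r ∈ ℂ[x] be linearly independent polynomials, each of degree at most d. Then their Wronskian W = det((d/dx)^i p_j)_{0 ≤ i,j ≤ r} is a nonzero polynomial of degree at most (r+1)(d−r). -/

import Mathlib

open Polynomial

/-- The Wronskian of a family of `r+1` polynomials: the determinant of the
`(r+1) × (r+1)` matrix whose `(i,j)` entry is the `i`-th formal derivative of the
`j`-th polynomial. -/
noncomputable def wronskianFam {K : Type*} [CommRing K] {r : ℕ}
    (g : Fin (r + 1) → K[X]) : K[X] :=
  Matrix.det (Matrix.of fun i j : Fin (r + 1) => derivative^[(i : ℕ)] (g j))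

/-!
The span `V` of the `pⱼ` has dimension `r + 1` and lies in the polynomials of degree `≤ d`, so the
degrees of its nonzero elements take at least `r + 1` values; this yields `Q₀, …, Q_r ∈ V` of
degrees `e₀ < ⋯ < e_r ≤ d`. Writing `Qᵢ = ∑ₖ cᵢₖ pₖ` gives `W(Q) = W(p) · det c`.
Every Leibniz term `∏ᵢ Qᵢ^(σ i)` of `W(Q)` has degree at most `N = ∑ eᵢ - ∑ i`, and its coefficient
at `N` is `∏ᵢ (eᵢ)_(σ i) · lc(Qᵢ)` (falling factorials), so the coefficient of `W(Q)` at `N` is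
`det ((eᵢ)_k) · ∏ lc(Qᵢ)`. That determinant equals the Vandermonde determinant of the distinct
`eᵢ`, hence `W(Q) ≠ 0`, and then `det c ≠ 0` and `deg W(p) = deg W(Q) ≤ N ≤ (r + 1)(d - r)`,
the last step because `eᵢ ≤ d - r + i`.
-/

open Finset Matrix Module

theorem Matrix.det_descFactorial_eq_det_vandermonde {R : Type*} [CommRing R] [IsDomain R]
    {n : ℕ} (e : Fin n → ℕ) :
    (of fun (k : Fin n) i => ((e i).descFactorial k : R)).det =
      (vandermonde fun i => (e i : R)).det := by
  rw [det_eval_matrixOfPolynomials_eq_det_vandermonde _ (fun k => descPochhammer R k)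
    (fun k => descPochhammer_natDegree R k) (fun k => monic_descPochhammer R k), ← det_transpose]
  congr 1
  ext k i
  simp [descPochhammer_eval_eq_descFactorial]

theorem Fin.sum_tsub_perm_eq {n : ℕ} {e : Fin n → ℕ} {σ : Equiv.Perm (Fin n)}
    (hσ : ∀ i, (σ i : ℕ) ≤ e i) : ∑ i, (e i - σ i) = ∑ i, e i - ∑ i : Fin n, (i : ℕ) := by
  rw [sum_tsub_distrib _ fun i _ => hσ i, Equiv.sum_comp σ (fun i : Fin n => (i : ℕ))]

theorem StrictMono.add_le_apply_last {n : ℕ} {e : Fin (n + 1) → ℕ} (he : StrictMono e)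
    (i : Fin (n + 1)) : e i + (n - i) ≤ e (Fin.last n) := by
  induction i using Fin.reverseInduction with
  | last => simp
  | cast i ih =>
    have hstep := he (Fin.castSucc_lt_succ (i := i))
    simp only [Fin.val_castSucc, Fin.val_succ] at ih ⊢
    omega

theorem Fin.sum_tsub_sum_val_le_of_strictMono {n d : ℕ} {e : Fin (n + 1) → ℕ}
    (he : StrictMono e) (hd : e (Fin.last n) ≤ d) :
    ∑ i, e i - ∑ i : Fin (n + 1), (i : ℕ) ≤ (n + 1) * (d - n) := by
  have hle (i : Fin (n + 1)) : e i ≤ d - n + i := by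
    have hlast := he.add_le_apply_last i
    have hi := i.is_le
    omega
  have hsum : ∑ i, e i ≤ ∑ i : Fin (n + 1), (d - n + i) := sum_le_sum fun i _ => hle i
  rw [sum_add_distrib, Fin.sum_const, smul_eq_mul] at hsum
  omega

namespace Polynomial

section CommRing

variable {R : Type*} [CommRing R]

theorem coeff_prod_sum_of_natDegree_le {ι : Type*} (s : Finset ι) (f : ι → R[X]) (n : ι → ℕ)
    (h : ∀ i ∈ s, (f i).natDegree ≤ n i) :
    (∏ i ∈ s, f i).coeff (∑ i ∈ s, n i) = ∏ i ∈ s, (f i).coeff (n i) := by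
  classical
  induction s using Finset.cons_induction with
  | empty => simp
  | cons a s ha ih =>
    have hs : ∀ i ∈ s, (f i).natDegree ≤ n i := fun i hi => h i (mem_cons_of_mem hi)
    rw [prod_cons, sum_cons, prod_cons, coeff_mul_add_eq_of_natDegree_le (h a (mem_cons_self a s))
      ((natDegree_prod_le _ _).trans (sum_le_sum hs)), ih hs]

theorem coeff_iterate_derivative_tsub {p : R[X]} {e : ℕ} (hp : p.natDegree ≤ e) (k : ℕ) :
    (derivative^[k] p).coeff (e - k) = (e.descFactorial k : R) * p.coeff e := by
  rw [coeff_iterate_derivative, nsmul_eq_mul]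
  rcases le_or_gt k e with hk | hk
  · rw [Nat.sub_add_cancel hk]
  · rw [Nat.sub_eq_zero_of_le hk.le, zero_add, coeff_eq_zero_of_natDegree_lt (hp.trans_lt hk),
      Nat.descFactorial_eq_zero_iff_lt.2 hk, mul_zero, Nat.cast_zero, zero_mul]

section Leibniz

variable {n : ℕ} {Q : Fin n → R[X]} {e : Fin n → ℕ}

theorem prod_iterate_derivative_eq_zero (hQ : ∀ i, (Q i).natDegree ≤ e i) {k : Fin n → ℕ}
    {i : Fin n} (hi : e i < k i) : ∏ i, derivative^[k i] (Q i) = 0 :=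
  prod_eq_zero (mem_univ i) (iterate_derivative_eq_zero ((hQ i).trans_lt hi))

theorem natDegree_prod_iterate_derivative_perm_le (hQ : ∀ i, (Q i).natDegree ≤ e i)
    (σ : Equiv.Perm (Fin n)) :
    (∏ i, derivative^[σ i] (Q i)).natDegree ≤ ∑ i, e i - ∑ i : Fin n, (i : ℕ) := by
  by_cases hσ : ∀ i, (σ i : ℕ) ≤ e i
  · rw [← Fin.sum_tsub_perm_eq hσ]
    exact (natDegree_prod_le _ _).trans <| sum_le_sum fun i _ =>
      (natDegree_iterate_derivative _ _).trans (Nat.sub_le_sub_right (hQ i) _)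
  · obtain ⟨i, hi⟩ := not_forall.1 hσ
    rw [prod_iterate_derivative_eq_zero hQ (not_le.1 hi), natDegree_zero]
    exact Nat.zero_le _

theorem coeff_prod_iterate_derivative_perm (hQ : ∀ i, (Q i).natDegree ≤ e i)
    (σ : Equiv.Perm (Fin n)) :
    (∏ i, derivative^[σ i] (Q i)).coeff (∑ i, e i - ∑ i : Fin n, (i : ℕ)) =
      ∏ i, ((e i).descFactorial (σ i) : R) * (Q i).coeff (e i) := by
  by_cases hσ : ∀ i, (σ i : ℕ) ≤ e i
  · rw [← Fin.sum_tsub_perm_eq hσ, coeff_prod_sum_of_natDegree_le _ _ _ fun i _ =>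
      (natDegree_iterate_derivative _ _).trans (Nat.sub_le_sub_right (hQ i) _)]
    exact prod_congr rfl fun i _ => coeff_iterate_derivative_tsub (hQ i) _
  · obtain ⟨i, hi⟩ := not_forall.1 hσ
    rw [prod_iterate_derivative_eq_zero hQ (not_le.1 hi), coeff_zero, prod_eq_zero (mem_univ i)]
    rw [Nat.descFactorial_eq_zero_iff_lt.2 (not_le.1 hi), Nat.cast_zero, zero_mul]

end Leibniz

variable {r : ℕ} {Q : Fin (r + 1) → R[X]} {e : Fin (r + 1) → ℕ}

theorem wronskianFam_sum_smul (c : Matrix (Fin (r + 1)) (Fin (r + 1)) R)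
    (p : Fin (r + 1) → R[X]) :
    wronskianFam (fun i => ∑ k, c i k • p k) = wronskianFam p * C c.det := by
  have hmat : (of fun i j : Fin (r + 1) => derivative^[(i : ℕ)] (∑ k, c j k • p k)) =
      (of fun i j : Fin (r + 1) => derivative^[(i : ℕ)] (p j)) * (c.map C)ᵀ := by
    refine Matrix.ext fun i j => ?_
    simp only [of_apply, Matrix.mul_apply, transpose_apply, map_apply, iterate_derivative_sum,
      iterate_derivative_smul]
    simp only [smul_eq_C_mul, mul_comm]
  rw [wronskianFam, wronskianFam, hmat, det_mul, det_transpose, RingHom.map_det]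
  rfl

theorem coeff_wronskianFam (hQ : ∀ i, (Q i).natDegree ≤ e i) :
    (wronskianFam Q).coeff (∑ i, e i - ∑ i : Fin (r + 1), (i : ℕ)) =
      (of fun (k : Fin (r + 1)) i => ((e i).descFactorial k : R)).det *
        ∏ i, (Q i).coeff (e i) := by
  rw [wronskianFam, det_apply, finsetSum_coeff, det_apply, sum_mul]
  refine sum_congr rfl fun σ _ => ?_
  simp only [of_apply, coeff_smul, coeff_prod_iterate_derivative_perm hQ, prod_mul_distrib,
    smul_mul_assoc]

theorem natDegree_wronskianFam_le (hQ : ∀ i, (Q i).natDegree ≤ e i) :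
    (wronskianFam Q).natDegree ≤ ∑ i, e i - ∑ i : Fin (r + 1), (i : ℕ) := by
  rw [wronskianFam, det_apply]
  exact natDegree_sum_le_of_forall_le _ _ fun σ _ =>
    (natDegree_smul_le _ _).trans (natDegree_prod_iterate_derivative_perm_le hQ σ)

theorem wronskianFam_ne_zero [IsDomain R] [CharZero R] (hQ : ∀ i, Q i ≠ 0)
    (hinj : Function.Injective fun i => (Q i).natDegree) :
    wronskianFam Q ≠ 0 := by
  have hcoeff := coeff_wronskianFam fun i => le_refl (Q i).natDegree
  rw [det_descFactorial_eq_det_vandermonde] at hcoeff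
  have hne : (wronskianFam Q).coeff (∑ i, (Q i).natDegree - ∑ i : Fin (r + 1), (i : ℕ)) ≠ 0 := by
    rw [hcoeff]
    exact mul_ne_zero (det_vandermonde_ne_zero_iff.2 (Nat.cast_injective.comp hinj))
      (prod_ne_zero_iff.2 fun i _ => leadingCoeff_ne_zero.2 (hQ i))
  exact fun h => hne (by rw [h, coeff_zero])

end CommRing

section Field

variable {K : Type*} [Field K]

open Classical in
theorem finrank_le_card_natDegree (V : Submodule K K[X]) {d : ℕ} (hV : V ≤ degreeLE K d) :
    finrank K V ≤ #{n ∈ range (d + 1) | ∃ q ∈ V, q ≠ 0 ∧ q.natDegree = n} := by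
  set D := {n ∈ range (d + 1) | ∃ q ∈ V, q ≠ 0 ∧ q.natDegree = n}
  let f : V →ₗ[K] D → K := LinearMap.pi fun n => (lcoeff K n).comp V.subtype
  have hf : Function.Injective f := by
    refine (injective_iff_map_eq_zero f).2 fun q hq => ?_
    by_contra hq0
    have hq0' : (q : K[X]) ≠ 0 := by simpa using hq0
    have hdeg : (q : K[X]).natDegree ≤ d :=
      natDegree_le_iff_degree_le.2 (mem_degreeLE.1 (hV q.2))
    have hmem : (q : K[X]).natDegree ∈ D :=
      mem_filter.2 ⟨mem_range.2 (Nat.lt_succ_of_le hdeg), q, q.2, hq0', rfl⟩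
    exact leadingCoeff_ne_zero.2 hq0' (congr_fun hq ⟨_, hmem⟩)
  simpa using LinearMap.finrank_le_finrank_of_injective hf

theorem exists_strictMono_natDegree (V : Submodule K K[X]) {d : ℕ} (hV : V ≤ degreeLE K d)
    {n : ℕ} (hn : n ≤ finrank K V) :
    ∃ Q : Fin n → K[X], (∀ i, Q i ∈ V) ∧ (∀ i, Q i ≠ 0) ∧
      StrictMono fun i => (Q i).natDegree := by
  classical
  set D := {n ∈ range (d + 1) | ∃ q ∈ V, q ≠ 0 ∧ q.natDegree = n}
  choose! q hqV hq0 hqdeg using fun m (hm : m ∈ D) => (mem_filter.1 hm).2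
  let e : Fin n ↪o ℕ := (Fin.castLEOrderEmb (hn.trans (finrank_le_card_natDegree V hV))).trans
    (D.orderEmbOfFin rfl)
  have heD (i : Fin n) : e i ∈ D := orderEmbOfFin_mem _ rfl _
  refine ⟨fun i => q (e i), fun i => hqV _ (heD i), fun i => hq0 _ (heD i), fun i j hij => ?_⟩
  simpa only [hqdeg _ (heD i), hqdeg _ (heD j)] using e.strictMono hij

end Field

end Polynomial

theorem wronskian_ne_zero_natDegree_le_general (r d : ℕ)
    (p : Fin (r + 1) → Polynomial ℂ)
    (hind : LinearIndependent ℂ p)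
    (hdeg : ∀ j, (p j).natDegree ≤ d) :
    wronskianFam p ≠ 0 ∧ (wronskianFam p).natDegree ≤ (r + 1) * (d - r) := by
  set V := Submodule.span ℂ (Set.range p)
  have hVdeg : V ≤ degreeLE ℂ d := Submodule.span_le.2 <| Set.range_subset_iff.2 fun j =>
    mem_degreeLE.2 (natDegree_le_iff_degree_le.1 (hdeg j))
  have hrank : finrank ℂ V = r + 1 := by rw [finrank_span_eq_card hind, Fintype.card_fin]
  obtain ⟨Q, hQV, hQ0, hQmono⟩ := exists_strictMono_natDegree V hVdeg hrank.ge
  choose c hc using fun i => (Submodule.mem_span_range_iff_exists_fun ℂ).1 (hQV i)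
  have hWQ : wronskianFam Q = wronskianFam p * C (Matrix.of c).det := by
    rw [← wronskianFam_sum_smul]
    simp only [Matrix.of_apply, hc]
  have hWQ0 : wronskianFam Q ≠ 0 := wronskianFam_ne_zero hQ0 hQmono.injective
  have hdet : (Matrix.of c).det ≠ 0 := fun h => hWQ0 (by rw [hWQ, h, C_0, mul_zero])
  refine ⟨fun h => hWQ0 (by rw [hWQ, h, zero_mul]), ?_⟩
  rw [← natDegree_mul_C hdet, ← hWQ]
  exact (natDegree_wronskianFam_le fun i => le_rfl).trans <| Fin.sum_tsub_sum_val_le_of_strictMono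
    hQmono (natDegree_le_iff_degree_le.2 (mem_degreeLE.1 (hVdeg (hQV _))))

/-- If `p₀, …, p_r` are linearly independent complex polynomials of degree at most `d`
(with `r ≤ d`), then their Wronskian is a nonzero polynomial of degree at most
`(r+1)(d−r)`. -/
theorem wronskian_ne_zero_natDegree_le (r d : ℕ) (hrd : r ≤ d)
    (p : Fin (r + 1) → Polynomial ℂ)
    (hind : LinearIndependent ℂ p)
    (hdeg : ∀ j, (p j).natDegree ≤ d) :
    wronskianFam p ≠ 0 ∧ (wronskianFam p).natDegree ≤ (r + 1) * (d - r) :=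
  wronskian_ne_zero_natDegree_le_general r d p hind hdeg
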